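/- Let a > 0, ξ ∈ ℝ³ with ξ ≠ 0, and let λ₁, λ₂, λ₃ ∈ ℂ be pairwise distinct roots of z³ + a|ξ|²z² + (|ξ|²+1)z + a|ξ|⁴ = 0 with each λⱼ ≠ 0 and λᵢ + λⱼ ≠ 0 for i ≠ j. Let M₁⁰, M₂⁰, M₃⁰ ∈ ℂ³ satisfy ξ·Mⱼ⁰ = 0 for j = 1,2,3, set D = (λ₁−λ₂)(λ₂−λ₃)(λ₃−λ₁), and define C₁ = [−λ₁(λ₂−λ₃)M₁⁰ + λ₁(λ₂²−λ₃²)M₂⁰ + (λ₂²−λ₃²)·iξ×M₃⁰]/D, C₂ = [−λ₂(λ₃−λ₁)M₁⁰ + λ₂(λ₃²−λ₁²)M₂⁰ + (λ₃²−λ₁²)·iξ×M₃⁰]/D, C₃ = [−λ₃(λ₁−λ₂)M₁⁰ + λ₃(λ₁²−λ₂²)M₂⁰ + (λ₁²−λ₂²)·iξ×M₃⁰]/D. Then the two identities hold: M₃⁰ + iξ×(C₁/λ₁ + C₂/λ₂ + C₃/λ₃) = 0 and M₁⁰ + C₁/(λ₁ + a|ξ|²) + C₂/(λ₂ + a|ξ|²)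 + C₃/(λ₃ + a|ξ|²) = 0. -/

import Mathlib

noncomputable section

/-- Complex cross product of two vectors in `ℂ³`. -/
def crossC (a b : Fin 3 → ℂ) : Fin 3 → ℂ :=
  ![a 1 * b 2 - a 2 * b 1, a 2 * b 0 - a 0 * b 2, a 0 * b 1 - a 1 * b 0]

/-- The complexification of a real vector `ξ ∈ ℝ³`. -/
def vecC (ξ : EuclideanSpace ℝ (Fin 3)) : Fin 3 → ℂ := fun i => ((ξ i : ℝ) : ℂ)

/-!
Put `ρ = |ξ|²` and `s = a|ξ|²`, so that the cubic is `z³ + s z² + (ρ + 1) z + sρ`, and let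
`eₖ` be the elementary symmetric functions of the roots. Vieta's formulas give `e₃ = ρ e₁` and
`(λ₁ + λ₂)(λ₂ + λ₃)(λ₃ + λ₁) = e₁e₂ - e₃ = e₁`.

In `Σ Cⱼ/λⱼ` the contributions of `M₁⁰` and `M₂⁰` cancel, leaving `-(e₁/e₃) iξ×M₃⁰`; since
`ξ·M₃⁰ = 0`, `ξ×(ξ×M₃⁰) = -ρ M₃⁰`, and `e₃ = ρ e₁` gives the first identity. In the second,
`λⱼ + s` is minus the sum of the other two roots; the contributions of `M₂⁰` and `M₃⁰` cancel
and that of `M₁⁰` is `-e₁ / ((λ₁ + λ₂)(λ₂ + λ₃)(λ₃ + λ₁)) = -1`.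
-/
open Matrix

section Cubic

variable {K : Type*} [Field K]

theorem vieta_of_distinct_roots {p q r l₁ l₂ l₃ : K}
    (h₁ : l₁^3 + p*l₁^2 + q*l₁ + r = 0) (h₂ : l₂^3 + p*l₂^2 + q*l₂ + r = 0)
    (h₃ : l₃^3 + p*l₃^2 + q*l₃ + r = 0) (h12 : l₁ ≠ l₂) (h23 : l₂ ≠ l₃) (h31 : l₃ ≠ l₁) :
    l₁ + l₂ + l₃ = -p ∧ l₁*l₂ + l₂*l₃ + l₃*l₁ = q ∧ l₁*l₂*l₃ = -r := by
  have hA : l₁^2 + l₁*l₂ + l₂^2 + p*(l₁+l₂) + q = 0 := by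
    refine (mul_eq_zero.mp ?_).resolve_left (sub_ne_zero.mpr h12)
    linear_combination h₁ - h₂
  have hB : l₂^2 + l₂*l₃ + l₃^2 + p*(l₂+l₃) + q = 0 := by
    refine (mul_eq_zero.mp ?_).resolve_left (sub_ne_zero.mpr h23)
    linear_combination h₂ - h₃
  have hsum : l₁ + l₂ + l₃ = -p := by
    have h : (l₃-l₁) * (l₁ + l₂ + l₃ + p) = 0 := by linear_combination hB - hA
    linear_combination (mul_eq_zero.mp h).resolve_left (sub_ne_zero.mpr h31)
  have hpair : l₁*l₂ + l₂*l₃ + l₃*l₁ = q := by linear_combination (l₁+l₂)*hsum - hA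
  exact ⟨hsum, hpair, by linear_combination h₁ - l₁^2*hsum + l₁*hpair⟩

theorem sum_eq_and_prod_eq_and_prod_add_eq_of_distinct_roots {s ρ l₁ l₂ l₃ : K}
    (h₁ : l₁^3 + s*l₁^2 + (ρ+1)*l₁ + s*ρ = 0) (h₂ : l₂^3 + s*l₂^2 + (ρ+1)*l₂ + s*ρ = 0)
    (h₃ : l₃^3 + s*l₃^2 + (ρ+1)*l₃ + s*ρ = 0) (h12 : l₁ ≠ l₂) (h23 : l₂ ≠ l₃) (h31 : l₃ ≠ l₁) :
    l₁ + l₂ + l₃ = -s ∧ l₁*l₂*l₃ = ρ * (l₁+l₂+l₃) ∧ (l₁+l₂)*(l₂+l₃)*(l₃+l₁) = l₁+l₂+l₃ := by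
  obtain ⟨he1, he2, he3⟩ := vieta_of_distinct_roots h₁ h₂ h₃ h12 h23 h31
  exact ⟨he1, by linear_combination he3 - ρ * he1,
    by linear_combination (l₁*l₂ + l₂*l₃ + l₃*l₁ - 1) * he1 - s * he2 - he3⟩

end Cubic

section ModeCoefficients

variable {K : Type*} [Field K] {l₁ l₂ l₃ : K}

/-- The paper's `C₁` evaluated at scalar data `x = M₁⁰`, `y = M₂⁰`, `w = iξ×M₃⁰`; `C₂` and `C₃`
are `modeCoeff l₂ l₃ l₁` and `modeCoeff l₃ l₁ l₂`. -/
def modeCoeff (l₁ l₂ l₃ x y w : K) : K :=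
  (-l₁*(l₂-l₃)*x + l₁*(l₂^2-l₃^2)*y + (l₂^2-l₃^2)*w) / ((l₁-l₂)*(l₂-l₃)*(l₃-l₁))

theorem sum_modeCoeff_div_self (h12 : l₁ ≠ l₂) (h23 : l₂ ≠ l₃) (h31 : l₃ ≠ l₁)
    (hz1 : l₁ ≠ 0) (hz2 : l₂ ≠ 0) (hz3 : l₃ ≠ 0) (x y w : K) :
    modeCoeff l₁ l₂ l₃ x y w / l₁ + modeCoeff l₂ l₃ l₁ x y w / l₂
      + modeCoeff l₃ l₁ l₂ x y w / l₃ = -((l₁+l₂+l₃) / (l₁*l₂*l₃)) * w := by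
  have := sub_ne_zero.mpr h12; have := sub_ne_zero.mpr h23; have := sub_ne_zero.mpr h31
  unfold modeCoeff
  field_simp
  ring

theorem sum_modeCoeff_div_neg_add (h12 : l₁ ≠ l₂) (h23 : l₂ ≠ l₃) (h31 : l₃ ≠ l₁)
    (hs12 : l₁ + l₂ ≠ 0) (hs23 : l₂ + l₃ ≠ 0) (hs31 : l₃ + l₁ ≠ 0) (x y w : K) :
    modeCoeff l₁ l₂ l₃ x y w / -(l₂+l₃) + modeCoeff l₂ l₃ l₁ x y w / -(l₃+l₁)
      + modeCoeff l₃ l₁ l₂ x y w / -(l₁+l₂)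
      = -((l₁+l₂+l₃) / ((l₁+l₂)*(l₂+l₃)*(l₃+l₁))) * x := by
  have := sub_ne_zero.mpr h12; have := sub_ne_zero.mpr h23; have := sub_ne_zero.mpr h31
  unfold modeCoeff
  field_simp
  ring

theorem add_sum_modeCoeff_div_add_eq_zero {s : K} (hsum : l₁ + l₂ + l₃ = -s)
    (hpairs : (l₁+l₂)*(l₂+l₃)*(l₃+l₁) = l₁+l₂+l₃) (h12 : l₁ ≠ l₂) (h23 : l₂ ≠ l₃)
    (h31 : l₃ ≠ l₁) (hs12 : l₁ + l₂ ≠ 0) (hs23 : l₂ + l₃ ≠ 0) (hs31 : l₃ + l₁ ≠ 0) (x y w : K) :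
    x + modeCoeff l₁ l₂ l₃ x y w / (l₁ + s) + modeCoeff l₂ l₃ l₁ x y w / (l₂ + s)
      + modeCoeff l₃ l₁ l₂ x y w / (l₃ + s) = 0 := by
  have he : l₁ + l₂ + l₃ ≠ 0 := by rw [← hpairs]; simp [hs12, hs23, hs31]
  have h := sum_modeCoeff_div_neg_add h12 h23 h31 hs12 hs23 hs31 x y w
  rw [hpairs, div_self he] at h
  rw [show l₁ + s = -(l₂+l₃) by linear_combination hsum,
    show l₂ + s = -(l₃+l₁) by linear_combination hsum,
    show l₃ + s = -(l₁+l₂) by linear_combination hsum]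
  linear_combination h

end ModeCoefficients

theorem add_I_smul_cross_smul_cross {u v : Fin 3 → ℂ} (h : u ⬝ᵥ v = 0) (c : ℂ) :
    v + Complex.I • (u ⨯₃ ((c * Complex.I) • (u ⨯₃ v))) = (1 + c * (u ⬝ᵥ u)) • v := by
  have hI : Complex.I * (c * Complex.I * (u ⬝ᵥ u)) = -(c * (u ⬝ᵥ u)) := by
    linear_combination (c * (u ⬝ᵥ u)) * Complex.I_mul_I
  rw [map_smul, cross_cross_eq_smul_sub_smul', h, zero_smul, zero_sub, smul_neg, smul_smul,
    smul_neg, smul_smul, hI]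
  module

theorem add_I_smul_cross_sum_modeCoeff_div_self {u M₁ M₂ M₃ W : Fin 3 → ℂ} {l₁ l₂ l₃ : ℂ}
    (hM₃ : u ⬝ᵥ M₃ = 0) (hW : W = Complex.I • (u ⨯₃ M₃))
    (hprod : l₁*l₂*l₃ = (u ⬝ᵥ u) * (l₁+l₂+l₃)) (h12 : l₁ ≠ l₂) (h23 : l₂ ≠ l₃) (h31 : l₃ ≠ l₁)
    (hz1 : l₁ ≠ 0) (hz2 : l₂ ≠ 0) (hz3 : l₃ ≠ 0) :
    M₃ + Complex.I • (u ⨯₃ fun j => modeCoeff l₁ l₂ l₃ (M₁ j) (M₂ j) (W j) / l₁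
      + modeCoeff l₂ l₃ l₁ (M₁ j) (M₂ j) (W j) / l₂
      + modeCoeff l₃ l₁ l₂ (M₁ j) (M₂ j) (W j) / l₃) = 0 := by
  have hV : (fun j => modeCoeff l₁ l₂ l₃ (M₁ j) (M₂ j) (W j) / l₁
      + modeCoeff l₂ l₃ l₁ (M₁ j) (M₂ j) (W j) / l₂
      + modeCoeff l₃ l₁ l₂ (M₁ j) (M₂ j) (W j) / l₃)
        = (-((l₁+l₂+l₃) / (l₁*l₂*l₃)) * Complex.I) • (u ⨯₃ M₃) := by
    ext j
    rw [sum_modeCoeff_div_self h12 h23 h31 hz1 hz2 hz3, hW]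
    simp [mul_assoc]
  have hρe : (u ⬝ᵥ u) * (l₁+l₂+l₃) ≠ 0 := by rw [← hprod]; simp [hz1, hz2, hz3]
  have hcoef : 1 + -((l₁+l₂+l₃) / (l₁*l₂*l₃)) * (u ⬝ᵥ u) = 0 := by
    rw [hprod]
    field_simp [left_ne_zero_of_mul hρe, right_ne_zero_of_mul hρe]
    ring
  rw [hV, add_I_smul_cross_smul_cross hM₃, hcoef, zero_smul]

theorem crossC_eq_crossProduct (a b : Fin 3 → ℂ) : crossC a b = a ⨯₃ b := rfl

theorem vecC_dotProduct_self (ξ : EuclideanSpace ℝ (Fin 3)) :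
    vecC ξ ⬝ᵥ vecC ξ = ((‖ξ‖^2 : ℝ) : ℂ) := by
  rw [EuclideanSpace.norm_sq_eq]
  simp [vecC, dotProduct, sq]

theorem stmt8_general (a : ℝ) (ξ : EuclideanSpace ℝ (Fin 3))
    (l₁ l₂ l₃ : ℂ)
    (hr1 : l₁^3 + ((a*‖ξ‖^2 : ℝ):ℂ)*l₁^2 + ((‖ξ‖^2+1 : ℝ):ℂ)*l₁ + ((a*‖ξ‖^4 : ℝ):ℂ) = 0)
    (hr2 : l₂^3 + ((a*‖ξ‖^2 : ℝ):ℂ)*l₂^2 + ((‖ξ‖^2+1 : ℝ):ℂ)*l₂ + ((a*‖ξ‖^4 : ℝ):ℂ) = 0)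
    (hr3 : l₃^3 + ((a*‖ξ‖^2 : ℝ):ℂ)*l₃^2 + ((‖ξ‖^2+1 : ℝ):ℂ)*l₃ + ((a*‖ξ‖^4 : ℝ):ℂ) = 0)
    (h12 : l₁ ≠ l₂) (h23 : l₂ ≠ l₃) (h31 : l₃ ≠ l₁)
    (hz1 : l₁ ≠ 0) (hz2 : l₂ ≠ 0) (hz3 : l₃ ≠ 0)
    (hs12 : l₁ + l₂ ≠ 0) (hs23 : l₂ + l₃ ≠ 0) (hs31 : l₃ + l₁ ≠ 0)
    (M₁ M₂ M₃ : Fin 3 → ℂ)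
    (hM3 : (∑ i, ((ξ i : ℝ):ℂ) * M₃ i) = 0)
    (C₁ C₂ C₃ : Fin 3 → ℂ)
    (hC1 : ∀ i, C₁ i = (-(l₁)*(l₂-l₃)*M₁ i + l₁*(l₂^2-l₃^2)*M₂ i
      + (l₂^2-l₃^2)*(Complex.I * crossC (vecC ξ) M₃ i))
        / ((l₁-l₂)*(l₂-l₃)*(l₃-l₁)))
    (hC2 : ∀ i, C₂ i = (-(l₂)*(l₃-l₁)*M₁ i + l₂*(l₃^2-l₁^2)*M₂ i
      + (l₃^2-l₁^2)*(Complex.I * crossC (vecC ξ) M₃ i))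
        / ((l₁-l₂)*(l₂-l₃)*(l₃-l₁)))
    (hC3 : ∀ i, C₃ i = (-(l₃)*(l₁-l₂)*M₁ i + l₃*(l₁^2-l₂^2)*M₂ i
      + (l₁^2-l₂^2)*(Complex.I * crossC (vecC ξ) M₃ i))
        / ((l₁-l₂)*(l₂-l₃)*(l₃-l₁))) :
    (∀ i, M₃ i + Complex.I
        * crossC (vecC ξ) (fun j => C₁ j / l₁ + C₂ j / l₂ + C₃ j / l₃) i = 0) ∧
    (∀ i, M₁ i + C₁ i / (l₁ + ((a*‖ξ‖^2 : ℝ):ℂ))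
        + C₂ i / (l₂ + ((a*‖ξ‖^2 : ℝ):ℂ))
        + C₃ i / (l₃ + ((a*‖ξ‖^2 : ℝ):ℂ)) = 0) := by
  set s : ℂ := ((a*‖ξ‖^2 : ℝ):ℂ)
  have hcubic (l : ℂ) : l^3 + s*l^2 + ((‖ξ‖^2+1 : ℝ):ℂ)*l + ((a*‖ξ‖^4 : ℝ):ℂ)
      = l^3 + s*l^2 + (vecC ξ ⬝ᵥ vecC ξ + 1)*l + s*(vecC ξ ⬝ᵥ vecC ξ) := by
    rw [vecC_dotProduct_self]; simp only [s]; push_cast; ring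
  rw [hcubic] at hr1 hr2 hr3
  obtain ⟨hsum, hprod, hpairs⟩ :=
    sum_eq_and_prod_eq_and_prod_add_eq_of_distinct_roots hr1 hr2 hr3 h12 h23 h31
  set W := Complex.I • crossC (vecC ξ) M₃ with hW
  have hC (i : Fin 3) : C₁ i = modeCoeff l₁ l₂ l₃ (M₁ i) (M₂ i) (W i) ∧
      C₂ i = modeCoeff l₂ l₃ l₁ (M₁ i) (M₂ i) (W i) ∧
      C₃ i = modeCoeff l₃ l₁ l₂ (M₁ i) (M₂ i) (W i) := by
    refine ⟨?_, ?_, ?_⟩ <;>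
      simp only [hC1, hC2, hC3, modeCoeff, W, Pi.smul_apply, smul_eq_mul] <;> ring
  refine ⟨fun i => ?_, fun i => ?_⟩
  · simp only [hC, crossC_eq_crossProduct]
    exact congrFun
      (add_I_smul_cross_sum_modeCoeff_div_self hM3 hW hprod h12 h23 h31 hz1 hz2 hz3) i
  · obtain ⟨h1, h2, h3⟩ := hC i
    rw [h1, h2, h3]
    exact add_sum_modeCoeff_div_add_eq_zero hsum hpairs h12 h23 h31 hs12 hs23 hs31 _ _ _

/-- the two identities
`M₃⁰ + iξ×(C₁/l₁ + C₂/l₂ + C₃/l₃) = 0` and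
`M₁⁰ + C₁/(l₁+a|ξ|²) + C₂/(l₂+a|ξ|²) + C₃/(l₃+a|ξ|²) = 0`
for the coefficients `Cⱼ` built from the pairwise-distinct roots
`l₁, l₂, l₃` of `z³ + a|ξ|²z² + (|ξ|²+1)z + a|ξ|⁴ = 0` and data
`M₁⁰, M₂⁰, M₃⁰ ⊥ ξ`. -/
theorem stmt8 (a : ℝ) (ha : 0 < a) (ξ : EuclideanSpace ℝ (Fin 3)) (hξ : ξ ≠ 0)
    (l₁ l₂ l₃ : ℂ)
    (hr1 : l₁^3 + ((a*‖ξ‖^2 : ℝ):ℂ)*l₁^2 + ((‖ξ‖^2+1 : ℝ):ℂ)*l₁ + ((a*‖ξ‖^4 : ℝ):ℂ) = 0)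
    (hr2 : l₂^3 + ((a*‖ξ‖^2 : ℝ):ℂ)*l₂^2 + ((‖ξ‖^2+1 : ℝ):ℂ)*l₂ + ((a*‖ξ‖^4 : ℝ):ℂ) = 0)
    (hr3 : l₃^3 + ((a*‖ξ‖^2 : ℝ):ℂ)*l₃^2 + ((‖ξ‖^2+1 : ℝ):ℂ)*l₃ + ((a*‖ξ‖^4 : ℝ):ℂ) = 0)
    (h12 : l₁ ≠ l₂) (h23 : l₂ ≠ l₃) (h31 : l₃ ≠ l₁)
    (hz1 : l₁ ≠ 0) (hz2 : l₂ ≠ 0) (hz3 : l₃ ≠ 0)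
    (hs12 : l₁ + l₂ ≠ 0) (hs23 : l₂ + l₃ ≠ 0) (hs31 : l₃ + l₁ ≠ 0)
    (M₁ M₂ M₃ : Fin 3 → ℂ)
    (hM1 : (∑ i, ((ξ i : ℝ):ℂ) * M₁ i) = 0)
    (hM2 : (∑ i, ((ξ i : ℝ):ℂ) * M₂ i) = 0)
    (hM3 : (∑ i, ((ξ i : ℝ):ℂ) * M₃ i) = 0)
    (C₁ C₂ C₃ : Fin 3 → ℂ)
    (hC1 : ∀ i, C₁ i = (-(l₁)*(l₂-l₃)*M₁ i + l₁*(l₂^2-l₃^2)*M₂ i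
      + (l₂^2-l₃^2)*(Complex.I * crossC (vecC ξ) M₃ i))
        / ((l₁-l₂)*(l₂-l₃)*(l₃-l₁)))
    (hC2 : ∀ i, C₂ i = (-(l₂)*(l₃-l₁)*M₁ i + l₂*(l₃^2-l₁^2)*M₂ i
      + (l₃^2-l₁^2)*(Complex.I * crossC (vecC ξ) M₃ i))
        / ((l₁-l₂)*(l₂-l₃)*(l₃-l₁)))
    (hC3 : ∀ i, C₃ i = (-(l₃)*(l₁-l₂)*M₁ i + l₃*(l₁^2-l₂^2)*M₂ i
      + (l₁^2-l₂^2)*(Complex.I * crossC (vecC ξ) M₃ i))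
        / ((l₁-l₂)*(l₂-l₃)*(l₃-l₁))) :
    (∀ i, M₃ i + Complex.I
        * crossC (vecC ξ) (fun j => C₁ j / l₁ + C₂ j / l₂ + C₃ j / l₃) i = 0) ∧
    (∀ i, M₁ i + C₁ i / (l₁ + ((a*‖ξ‖^2 : ℝ):ℂ))
        + C₂ i / (l₂ + ((a*‖ξ‖^2 : ℝ):ℂ))
        + C₃ i / (l₃ + ((a*‖ξ‖^2 : ℝ):ℂ)) = 0) :=
  stmt8_general a ξ l₁ l₂ l₃ hr1 hr2 hr3 h12 h23 h31 hz1 hz2 hz3 hs12 hs23 hs31 M₁ M₂ M₃ hM3 C₁ C₂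
    C₃ hC1 hC2 hC3
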